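/- arXiv:1405.3637 — 4 statements merged into one kernel-verified Lean document; each statement's English description precedes it below -/
import Mathlib

section
/- Let A be an answer set of a ground Alog program Π. Then A satisfies every rule r of Π. -/
/- A formalization of ground Alog programs (logic programs with aggregates),
   following Gelfond & Zhang, "Vicious Circle Principle and Logic Programs
   with Aggregates". -/

namespace Alog

/-- The arithmetic relations allowed in aggregate atoms. -/
inductive AggRel : Type
  | gt | ge | lt | le | eq | ne

/-- Evaluation of an arithmetic relation on integers. -/
def AggRel.eval : AggRel → ℤ → ℤ → Prop
  | .gt, x, y => x > y
  | .ge, x, y => x ≥ y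
  | .lt, x, y => x < y
  | .le, x, y => x ≤ y
  | .eq, x, y => x = y
  | .ne, x, y => x ≠ y

/-- A ground aggregate atom `f{X̄ : cond} ⊙ n`.  `cond t` is the set of atoms
of the instance `cond(t̄)` of the condition at the tuple `t̄` of ground terms
(the type `Term` plays the role of tuples of ground terms). -/
structure AggAtom (Term Atom : Type) where
  f : Set Term → ℤ
  cond : Term → Set Atom
  rel : AggRel
  n : ℤ

variable {Term Atom : Type}

/-- An aggregate atom is true in a set `S` of ground atoms iff
`f({t̄ : every atom of cond(t̄) is in S}) ⊙ n` holds. -/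
def AggAtom.trueIn (g : AggAtom Term Atom) (S : Set Atom) : Prop :=
  g.rel.eval (g.f {t | g.cond t ⊆ S}) g.n

/-- The atoms replacing an aggregate atom in the aggregate reduct w.r.t. `S`:
all atoms of the instances `cond(t̄)` with every atom of `cond(t̄)` in `S`. -/
def AggAtom.reductAtoms (g : AggAtom Term Atom) (S : Set Atom) : Set Atom :=
  ⋃ t ∈ {t | g.cond t ⊆ S}, g.cond t

/-- A ground Alog rule: a disjunctive head, positive body atoms, atoms under
default negation, and aggregate atoms. -/
structure Rule (Term Atom : Type) where
  head : Set Atom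
  pos : Set Atom
  neg : Set Atom
  agg : Set (AggAtom Term Atom)

/-- The body of a rule is satisfied by `S`. -/
def Rule.bodySat (r : Rule Term Atom) (S : Set Atom) : Prop :=
  r.pos ⊆ S ∧ (∀ a ∈ r.neg, a ∉ S) ∧ (∀ g ∈ r.agg, g.trueIn S)

/-- A rule is satisfied by `S`: if the body is satisfied then some head atom is in `S`. -/
def Rule.sat (r : Rule Term Atom) (S : Set Atom) : Prop :=
  r.bodySat S → ∃ a ∈ r.head, a ∈ S

/-- The aggregate reduct of a single (kept) rule w.r.t. `S`: every aggregate
atom is replaced by its reduct, added to the positive body. -/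
def Rule.aggReduct (r : Rule Term Atom) (S : Set Atom) : Rule Term Atom :=
  ⟨r.head, r.pos ∪ ⋃ g ∈ r.agg, g.reductAtoms S, r.neg, ∅⟩

/-- The aggregate reduct of a program w.r.t. `S`: rules containing an aggregate
atom false in `S` are removed; in the remaining rules every aggregate atom is
replaced by its reduct w.r.t. `S`. -/
def aggReduct (P : Set (Rule Term Atom)) (S : Set Atom) : Set (Rule Term Atom) :=
  (fun r => r.aggReduct S) '' {r ∈ P | ∀ g ∈ r.agg, g.trueIn S}

/-- The Gelfond–Lifschitz reduct of a program w.r.t. `S`: rules whose `neg`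
meets `S` are removed, and `neg` is deleted from the remaining rules. -/
def glReduct (P : Set (Rule Term Atom)) (S : Set Atom) : Set (Rule Term Atom) :=
  (fun r => { r with neg := ∅ }) '' {r ∈ P | ∀ a ∈ r.neg, a ∉ S}

/-- `S` satisfies every rule of the program `P`. -/
def isModel (S : Set Atom) (P : Set (Rule Term Atom)) : Prop :=
  ∀ r ∈ P, r.sat S

/-- Standard (Gelfond–Lifschitz) answer set: `S` is a minimal set of atoms
satisfying every rule of the GL reduct of the program w.r.t. `S`. -/
def standardAnswerSet (S : Set Atom) (P : Set (Rule Term Atom)) : Prop :=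
  isModel S (glReduct P S) ∧ ∀ T ⊆ S, isModel T (glReduct P S) → T = S

/-- `S` is an answer set of a ground Alog program `P` iff `S` is a standard
answer set of the aggregate reduct of `P` w.r.t. `S`. -/
def answerSet (S : Set Atom) (P : Set (Rule Term Atom)) : Prop :=
  standardAnswerSet S (aggReduct P S)

end Alog

/- Both reducts w.r.t. `S` only drop rules whose body `S` falsifies and body literals that `S`
already satisfies, so if `S` satisfies a reduct of a program w.r.t. `S`, it satisfies the
program itself. -/

namespace Alog

variable {Term Atom : Type}

theorem AggAtom.reductAtoms_subset (g : AggAtom Term Atom) (S : Set Atom) :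
    g.reductAtoms S ⊆ S :=
  Set.iUnion₂_subset fun _ ht => ht

theorem isModel_of_isModel_glReduct {P : Set (Rule Term Atom)} {S : Set Atom}
    (h : isModel S (glReduct P S)) : isModel S P := by
  rintro r hr ⟨hpos, hneg, hagg⟩
  have hsat : ({ r with neg := ∅ } : Rule Term Atom).sat S := h _ ⟨r, ⟨hr, hneg⟩, rfl⟩
  exact hsat ⟨hpos, fun _ ha => ha.elim, hagg⟩

theorem isModel_of_isModel_aggReduct {P : Set (Rule Term Atom)} {S : Set Atom}
    (h : isModel S (aggReduct P S)) : isModel S P := by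
  rintro r hr ⟨hpos, hneg, hagg⟩
  have hreduct_pos : r.pos ∪ ⋃ g ∈ r.agg, g.reductAtoms S ⊆ S :=
    Set.union_subset hpos (Set.iUnion₂_subset fun g _ => g.reductAtoms_subset S)
  have hsat : (r.aggReduct S).sat S := h _ ⟨r, ⟨hr, hagg⟩, rfl⟩
  exact hsat ⟨hreduct_pos, hneg, fun _ hg => hg.elim⟩

theorem answerSet.isModel {P : Set (Rule Term Atom)} {S : Set Atom} (h : answerSet S P) :
    isModel S P :=
  isModel_of_isModel_aggReduct (isModel_of_isModel_glReduct h.1)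

end Alog

theorem rule_satisfaction_general {Term Atom : Type} (P : Set (Alog.Rule Term Atom))
    (A : Set Atom) (h : Alog.answerSet A P) :
    ∀ r ∈ P, r.sat A :=
  h.isModel

/-- Let `A` be an answer set of a ground Alog program `Π`.
Then `A` satisfies every rule `r` of `Π`. -/
theorem rule_satisfaction {Term Atom : Type} (P : Set (Alog.Rule Term Atom))
    (hfin : P.Finite) (A : Set Atom) (h : Alog.answerSet A P) :
    ∀ r ∈ P, r.sat A :=
  rule_satisfaction_general P A h
end

section
/- Let A be an answer set of a ground Alog program Π and let p ∈ A. Then there is a rule r of Π such that the body of r is satisfied by A (pos(r) ⊆ A, neg(r) ∩ A = ∅, and every aggregate atom of r is true in A) and p is the only atom in the head of r that belongs to A (r supports p). -/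
/-
If no rule supports `p ∈ A`, then `A \ {p}` is still a model of the reduct: a rule whose body
holds in `A \ {p}` has a head atom in `A`, and if that atom is `p`, the failure of support
yields another one. This contradicts the minimality of `A`. The aggregate reduct keeps heads and
`neg` and only enlarges `pos`, so a supporting rule of the reduct comes from one of `Π`.
-/

namespace Alog

variable {Term Atom : Type}

def Rule.Supports (r : Rule Term Atom) (S : Set Atom) (p : Atom) : Prop :=
  r.bodySat S ∧ p ∈ r.head ∧ ∀ q ∈ r.head, q ∈ S → q = p

theorem isModel_diff_singleton_glReduct {Q : Set (Rule Term Atom)} {S : Set Atom} {p : Atom}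
    (hmod : isModel S (glReduct Q S)) (hQ : ∀ r ∈ Q, r.agg = ∅)
    (hunsupp : ∀ r ∈ Q, ¬ r.Supports S p) :
    isModel (S \ {p}) (glReduct Q S) := by
  rintro _ ⟨r, ⟨hrQ, hneg⟩, rfl⟩ ⟨hpos, -, -⟩
  have hposS : r.pos ⊆ S := hpos.trans Set.sdiff_subset
  have hagg : r.agg = ∅ := hQ r hrQ
  obtain ⟨a, haH, haS⟩ :=
    hmod _ ⟨r, ⟨hrQ, hneg⟩, rfl⟩ ⟨hposS, by simp, by simp [hagg]⟩
  by_cases hap : a = p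
  · subst hap
    have hbody : r.bodySat S := ⟨hposS, hneg, by simp [hagg]⟩
    simpa [Rule.Supports, hbody, haH] using hunsupp r hrQ
  · exact ⟨a, haH, haS, hap⟩

theorem standardAnswerSet.exists_supports {Q : Set (Rule Term Atom)} {S : Set Atom} {p : Atom}
    (h : standardAnswerSet S Q) (hQ : ∀ r ∈ Q, r.agg = ∅) (hp : p ∈ S) :
    ∃ r ∈ Q, r.Supports S p := by
  by_contra! hunsupp
  have hmin := h.2 (S \ {p}) Set.sdiff_subset (isModel_diff_singleton_glReduct h.1 hQ hunsupp)
  exact Set.notMem_sdiff_of_mem (Set.mem_singleton p) (hmin ▸ hp)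

theorem agg_eq_empty_of_mem_aggReduct {P : Set (Rule Term Atom)} {S : Set Atom}
    {r : Rule Term Atom} (hr : r ∈ aggReduct P S) : r.agg = ∅ := by
  obtain ⟨r, -, rfl⟩ := hr
  rfl

theorem Rule.Supports.of_aggReduct {r : Rule Term Atom} {S : Set Atom} {p : Atom}
    (hagg : ∀ g ∈ r.agg, g.trueIn S) (h : (r.aggReduct S).Supports S p) : r.Supports S p :=
  ⟨⟨Set.subset_union_left.trans h.1.1, h.1.2.1, hagg⟩, h.2⟩

end Alog

theorem supportedness_general {Term Atom : Type} (P : Set (Alog.Rule Term Atom))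
    (A : Set Atom) (h : Alog.answerSet A P)
    (p : Atom) (hp : p ∈ A) :
    ∃ r ∈ P, r.bodySat A ∧ p ∈ r.head ∧ ∀ q ∈ r.head, q ∈ A → q = p := by
  obtain ⟨_, ⟨r, ⟨hrP, hagg⟩, rfl⟩, hsupp⟩ :=
    Alog.standardAnswerSet.exists_supports h (fun _ => Alog.agg_eq_empty_of_mem_aggReduct) hp
  exact ⟨r, hrP, hsupp.of_aggReduct hagg⟩

/-- Let `A` be an answer set of a ground Alog program `Π` and
`p ∈ A`.  Then some rule `r` of `Π` supports `p`: the body of `r` is satisfied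
by `A` and `p` is the only head atom of `r` that belongs to `A`. -/
theorem supportedness {Term Atom : Type} (P : Set (Alog.Rule Term Atom))
    (hfin : P.Finite) (A : Set Atom) (h : Alog.answerSet A P)
    (p : Atom) (hp : p ∈ A) :
    ∃ r ∈ P, r.bodySat A ∧ p ∈ r.head ∧ ∀ q ∈ r.head, q ∈ A → q = p :=
  supportedness_general P A h p hp
end

section
/- Anti-chain property: if A₁ is an answer set of a ground Alog program Π, then there is no answer set A₂ of Π such that A₁ is a proper subset of A₂. Equivalently, any two answer sets of Π with A₁ ⊆ A₂ are equal. -/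
namespace Alog

variable {Term Atom : Type}

theorem AggAtom.trueIn_of_subset {g : AggAtom Term Atom} {S T : Set Atom} (hST : S ⊆ T)
    (hred : g.reductAtoms T ⊆ S) (hg : g.trueIn T) : g.trueIn S := by
  have hsat : {t | g.cond t ⊆ S} = {t | g.cond t ⊆ T} :=
    Set.Subset.antisymm (fun _ ht => ht.trans hST)
      (fun _ ht _ hx => hred (Set.mem_biUnion ht hx))
  rwa [AggAtom.trueIn, hsat]

theorem Rule.sat_aggReduct_withoutNeg_iff (r : Rule Term Atom) (S S' : Set Atom) :
    ({ r.aggReduct S with neg := ∅ } : Rule Term Atom).sat S' ↔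
      ((r.aggReduct S).pos ⊆ S' → ∃ a ∈ r.head, a ∈ S') := by
  simp [Rule.sat, Rule.bodySat, Rule.aggReduct]

/-- A model of the reduct w.r.t. `S` is a model of the reduct w.r.t. any `T ⊇ S`: a rule kept
in the reduct w.r.t. `T` whose reduced body holds in `S` is also kept w.r.t. `S`, since its
aggregate atoms see the same satisfied instances in `S` as in `T`. -/
theorem isModel_glReduct_aggReduct_of_subset {P : Set (Rule Term Atom)} {S T : Set Atom}
    (hST : S ⊆ T) (hS : isModel S (glReduct (aggReduct P S) S)) :
    isModel S (glReduct (aggReduct P T) T) := by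
  rintro _ ⟨_, ⟨⟨r, ⟨hrP, haggT⟩, rfl⟩, hnegT⟩, rfl⟩
  rw [Rule.sat_aggReduct_withoutNeg_iff]
  intro hbody
  have hpos : r.pos ⊆ S := fun a ha => hbody (Or.inl ha)
  have haggS : ∀ g ∈ r.agg, g.trueIn S := fun g hg =>
    AggAtom.trueIn_of_subset hST (fun a ha => hbody (Or.inr (Set.mem_biUnion hg ha)))
      (haggT g hg)
  have hnegS : ∀ a ∈ r.neg, a ∉ S := fun a ha haS => hnegT a ha (hST haS)
  have hmem : ({ r.aggReduct S with neg := ∅ } : Rule Term Atom) ∈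
      glReduct (aggReduct P S) S :=
    ⟨r.aggReduct S, ⟨⟨r, ⟨hrP, haggS⟩, rfl⟩, hnegS⟩, rfl⟩
  refine (Rule.sat_aggReduct_withoutNeg_iff r S S).1 (hS _ hmem) ?_
  exact Set.union_subset hpos (Set.iUnion₂_subset fun g _ => g.reductAtoms_subset S)

theorem answerSet.eq_of_subset {P : Set (Rule Term Atom)} {S T : Set Atom}
    (hS : answerSet S P) (hT : answerSet T P) (hST : S ⊆ T) : S = T :=
  hT.2 S hST (isModel_glReduct_aggReduct_of_subset hST hS.1)

end Alog

theorem antichain_general {Term Atom : Type} (P : Set (Alog.Rule Term Atom))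
    (A₁ : Set Atom) (h1 : Alog.answerSet A₁ P) :
    (∀ A₂ : Set Atom, Alog.answerSet A₂ P → ¬ A₁ ⊂ A₂) ∧
    (∀ A₂ : Set Atom, Alog.answerSet A₂ P → A₁ ⊆ A₂ → A₁ = A₂) :=
  ⟨fun _ h2 hss => hss.ne (h1.eq_of_subset h2 hss.1), fun _ h2 => h1.eq_of_subset h2⟩

/-- Anti-chain property: if `A₁` is an answer set of a ground
Alog program `Π`, then no answer set `A₂` of `Π` properly contains `A₁`;
equivalently, any two answer sets with `A₁ ⊆ A₂` are equal. -/
theorem antichain {Term Atom : Type} (P : Set (Alog.Rule Term Atom))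
    (hfin : P.Finite) (A₁ : Set Atom) (h1 : Alog.answerSet A₁ P) :
    (∀ A₂ : Set Atom, Alog.answerSet A₂ P → ¬ A₁ ⊂ A₂) ∧
    (∀ A₂ : Set Atom, Alog.answerSet A₂ P → A₁ ⊆ A₂ → A₁ = A₂) :=
  antichain_general P A₁ h1
end

section
/- Splitting Set Theorem: let Π₁ and Π₂ be ground Alog programs such that no ground atom occurring anywhere in Π₁ (in heads, pos, neg, or inside aggregate conditions) occurs in the head of any rule of Π₂, and let S be a set of ground atoms containing all atoms occurring in the heads of Π₁ but no atom occurring in the heads of Π₂. Then a set A of ground atoms is an answer set of Π₁ ∪ Π₂ if and only if A ∩ S is an answer set of Π₁ and A is an answer set of the program obtained by adding each atom of A ∩ S as a fact (a rule with that atom as head and empty body) to Π₂. -/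
namespace Alog

variable {Term Atom : Type}

/-- All ground atoms occurring in a rule: in the head, `pos`, `neg`, or inside
the aggregate conditions. -/
def Rule.atoms (r : Rule Term Atom) : Set Atom :=
  r.head ∪ r.pos ∪ r.neg ∪ ⋃ g ∈ r.agg, ⋃ t, g.cond t

/-- All atoms occurring in the heads of a program. -/
def headAtoms (P : Set (Rule Term Atom)) : Set Atom :=
  ⋃ r ∈ P, r.head

/-- The fact `a`: a rule with head `a` and empty body. -/
def fact (a : Atom) : Rule Term Atom := ⟨{a}, ∅, ∅, ∅⟩

/-- The program consisting of each atom of `B` as a fact. -/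
def facts (B : Set Atom) : Set (Rule Term Atom) := fact '' B

end Alog

/-!
After the aggregate and Gelfond–Lifschitz reducts, every rule is positive, so answer sets are
minimal models of positive programs, and a minimal model only contains head atoms. Hence an
answer set `A` of `Π₁ ∪ Π₂` (or of `facts (A ∩ S) ∪ Π₂`) lies in `S ∪ heads Π₂`. Since `Π₁`
avoids the heads of `Π₂`, `A` and `A ∩ S` then agree on every atom of `Π₁`, so `Π₁` has the
same reduct w.r.t. both. What remains is a splitting statement for positive programs, where the
rules of `Π₁` see only the `S`-part of a model and the rules of `Π₂` produce only its
complement.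
-/

namespace Alog

variable {Term Atom : Type}

def programAtoms (P : Set (Rule Term Atom)) : Set Atom :=
  ⋃ r ∈ P, r.atoms

def Rule.IsPositive (r : Rule Term Atom) : Prop :=
  r.neg = ∅ ∧ r.agg = ∅

def IsMinimalModel (X : Set Atom) (P : Set (Rule Term Atom)) : Prop :=
  isModel X P ∧ ∀ T ⊆ X, isModel T P → T = X

/-- The rule that `r` becomes in `glReduct (aggReduct P A) A`, when it is kept. -/
def Rule.reduct (A : Set Atom) (r : Rule Term Atom) : Rule Term Atom :=
  ⟨r.head, r.pos ∪ ⋃ g ∈ r.agg, g.reductAtoms A, ∅, ∅⟩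

def reduct (P : Set (Rule Term Atom)) (A : Set Atom) : Set (Rule Term Atom) :=
  glReduct (aggReduct P A) A

theorem answerSet_iff_isMinimalModel {A : Set Atom} {P : Set (Rule Term Atom)} :
    answerSet A P ↔ IsMinimalModel A (reduct P A) :=
  Iff.rfl

theorem mem_headAtoms {P : Set (Rule Term Atom)} {r : Rule Term Atom} {a : Atom}
    (hr : r ∈ P) (ha : a ∈ r.head) : a ∈ headAtoms P :=
  Set.mem_biUnion hr ha

theorem mem_programAtoms {P : Set (Rule Term Atom)} {r : Rule Term Atom} {a : Atom}
    (hr : r ∈ P) (ha : a ∈ r.atoms) : a ∈ programAtoms P :=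
  Set.mem_biUnion hr ha

theorem headAtoms_union {P Q : Set (Rule Term Atom)} :
    headAtoms (P ∪ Q) = headAtoms P ∪ headAtoms Q :=
  Set.biUnion_union P Q Rule.head

theorem headAtoms_facts {B : Set Atom} : headAtoms (facts B : Set (Rule Term Atom)) = B := by
  simp only [headAtoms, facts, Set.biUnion_image, fact, Set.biUnion_of_singleton]

theorem Rule.head_subset_atoms {r : Rule Term Atom} : r.head ⊆ r.atoms :=
  fun _ ha => by simp [Rule.atoms, ha]

theorem Rule.pos_subset_atoms {r : Rule Term Atom} : r.pos ⊆ r.atoms :=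
  fun _ ha => by simp [Rule.atoms, ha]

theorem Rule.neg_subset_atoms {r : Rule Term Atom} : r.neg ⊆ r.atoms :=
  fun _ ha => by simp [Rule.atoms, ha]

theorem Rule.cond_subset_atoms {r : Rule Term Atom} {g : AggAtom Term Atom}
    (hg : g ∈ r.agg) (t : Term) : g.cond t ⊆ r.atoms :=
  fun _ ha => Or.inr (Set.mem_biUnion hg (Set.mem_iUnion_of_mem t ha))

theorem Rule.reduct_atoms_subset {A : Set Atom} {r : Rule Term Atom} :
    (r.reduct A).atoms ⊆ r.atoms := by
  rintro a (((ha | ha | ha) | ha) | ha)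
  · exact Rule.head_subset_atoms ha
  · exact Rule.pos_subset_atoms ha
  · obtain ⟨g, hg, ha⟩ := Set.mem_iUnion₂.1 ha
    obtain ⟨t, -, ha⟩ := Set.mem_iUnion₂.1 ha
    exact Rule.cond_subset_atoms hg t ha
  · exact ha.elim
  · obtain ⟨g, hg, -⟩ := Set.mem_iUnion₂.1 ha
    exact hg.elim

section Congruence

variable {X Y : Set Atom}

theorem AggAtom.setOf_cond_subset_congr {g : AggAtom Term Atom}
    (h : ∀ t, ∀ a ∈ g.cond t, a ∈ X ↔ a ∈ Y) :
    {t | g.cond t ⊆ X} = {t | g.cond t ⊆ Y} := by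
  ext t
  exact forall₂_congr fun a ha => h t a ha

theorem Rule.bodySat_congr {r : Rule Term Atom} (h : ∀ a ∈ r.atoms, a ∈ X ↔ a ∈ Y) :
    r.bodySat X ↔ r.bodySat Y := by
  refine and_congr (forall₂_congr fun a ha => h a (Rule.pos_subset_atoms ha))
    (and_congr (forall₂_congr fun a ha => not_congr (h a (Rule.neg_subset_atoms ha)))
      (forall₂_congr fun g hg => ?_))
  rw [AggAtom.trueIn, AggAtom.trueIn, AggAtom.setOf_cond_subset_congr
    fun t a ha => h a (Rule.cond_subset_atoms hg t ha)]

theorem Rule.sat_congr {r : Rule Term Atom} (h : ∀ a ∈ r.atoms, a ∈ X ↔ a ∈ Y) :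
    r.sat X ↔ r.sat Y :=
  imp_congr (Rule.bodySat_congr h)
    (exists_congr fun a => and_congr_right fun ha => h a (Rule.head_subset_atoms ha))

theorem isModel_congr {P : Set (Rule Term Atom)} (h : ∀ a ∈ programAtoms P, a ∈ X ↔ a ∈ Y) :
    isModel X P ↔ isModel Y P :=
  forall₂_congr fun _ hr => Rule.sat_congr fun a ha => h a (mem_programAtoms hr ha)

end Congruence

section Reduct

variable {P : Set (Rule Term Atom)} {A : Set Atom}

theorem mem_reduct {r' : Rule Term Atom} :
    r' ∈ reduct P A ↔
      ∃ r ∈ P, (∀ g ∈ r.agg, g.trueIn A) ∧ (∀ a ∈ r.neg, a ∉ A) ∧ r' = r.reduct A := by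
  constructor
  · rintro ⟨_, ⟨⟨r, ⟨hrP, hagg⟩, rfl⟩, hneg⟩, rfl⟩
    exact ⟨r, hrP, hagg, hneg, rfl⟩
  · rintro ⟨r, hrP, hagg, hneg, rfl⟩
    exact ⟨r.aggReduct A, ⟨⟨r, ⟨hrP, hagg⟩, rfl⟩, hneg⟩, rfl⟩

theorem Rule.IsPositive.bodySat_iff {r : Rule Term Atom} (hr : r.IsPositive) {X : Set Atom} :
    r.bodySat X ↔ r.pos ⊆ X := by
  simp [Rule.bodySat, hr.1, hr.2]

theorem isPositive_of_mem_reduct {r' : Rule Term Atom} (h : r' ∈ reduct P A) :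
    r'.IsPositive := by
  obtain ⟨r, -, -, -, rfl⟩ := mem_reduct.1 h
  exact ⟨rfl, rfl⟩

theorem headAtoms_reduct_subset : headAtoms (reduct P A) ⊆ headAtoms P := by
  refine Set.iUnion₂_subset fun r' h => ?_
  obtain ⟨r, hr, -, -, rfl⟩ := mem_reduct.1 h
  exact fun a ha => mem_headAtoms hr ha

theorem programAtoms_reduct_subset : programAtoms (reduct P A) ⊆ programAtoms P := by
  refine Set.iUnion₂_subset fun r' h => ?_
  obtain ⟨r, hr, -, -, rfl⟩ := mem_reduct.1 h
  exact fun a ha => mem_programAtoms hr (Rule.reduct_atoms_subset ha)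

theorem reduct_union {Q : Set (Rule Term Atom)} :
    reduct (P ∪ Q) A = reduct P A ∪ reduct Q A := by
  ext r'
  simp only [Set.mem_union, mem_reduct, or_and_right, exists_or]

theorem reduct_facts {B : Set Atom} : reduct (facts B : Set (Rule Term Atom)) A = facts B := by
  ext r'
  simp only [mem_reduct, facts, Set.mem_image]
  constructor
  · rintro ⟨_, ⟨a, ha, rfl⟩, -, -, rfl⟩
    exact ⟨a, ha, by simp [Rule.reduct, fact]⟩
  · rintro ⟨a, ha, rfl⟩
    exact ⟨fact a, ⟨a, ha, rfl⟩, by simp [fact], by simp [fact], by simp [Rule.reduct, fact]⟩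

theorem reduct_congr {X Y : Set Atom} (h : ∀ a ∈ programAtoms P, a ∈ X ↔ a ∈ Y) :
    reduct P X = reduct P Y := by
  have hcond : ∀ r ∈ P, ∀ g ∈ r.agg, {t | g.cond t ⊆ X} = {t | g.cond t ⊆ Y} :=
    fun r hr g hg => AggAtom.setOf_cond_subset_congr
      fun t a ha => h a (mem_programAtoms hr (Rule.cond_subset_atoms hg t ha))
  have hrule : ∀ r ∈ P, r.reduct X = r.reduct Y := by
    intro r hr
    have hg : ∀ g ∈ r.agg, g.reductAtoms X = g.reductAtoms Y := fun g hg => by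
      rw [AggAtom.reductAtoms, AggAtom.reductAtoms, hcond r hr g hg]
    rw [Rule.reduct, Rule.reduct, Set.iUnion₂_congr hg]
  ext r'
  simp only [mem_reduct]
  refine exists_congr fun r => and_congr_right fun hr => and_congr ?_ (and_congr ?_ ?_)
  · exact forall₂_congr fun g hg => by rw [AggAtom.trueIn, AggAtom.trueIn, hcond r hr g hg]
  · exact forall₂_congr fun a ha =>
      not_congr (h a (mem_programAtoms hr (Rule.neg_subset_atoms ha)))
  · rw [hrule r hr]

end Reduct

section PositivePrograms

variable {P Q : Set (Rule Term Atom)} {X : Set Atom}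

theorem isModel_union : isModel X (P ∪ Q) ↔ isModel X P ∧ isModel X Q :=
  ⟨fun h => ⟨fun r hr => h r (Or.inl hr), fun r hr => h r (Or.inr hr)⟩,
    fun ⟨h₁, h₂⟩ r hr => hr.elim (h₁ r) (h₂ r)⟩

theorem isModel_facts {B : Set Atom} : isModel X (facts B : Set (Rule Term Atom)) ↔ B ⊆ X := by
  simp [isModel, facts, fact, Rule.sat, Rule.bodySat, Set.subset_def]

theorem isPositive_facts {B : Set Atom} :
    ∀ r ∈ (facts B : Set (Rule Term Atom)), r.IsPositive := by
  rintro _ ⟨a, -, rfl⟩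
  exact ⟨rfl, rfl⟩

theorem isModel_of_inter_subset (hP : ∀ r ∈ P, r.IsPositive) {H Y : Set Atom}
    (hH : headAtoms P ⊆ H) (hX : isModel X P) (hYX : Y ⊆ X) (hXY : X ∩ H ⊆ Y) :
    isModel Y P := by
  intro r hr hb
  rw [(hP r hr).bodySat_iff] at hb
  obtain ⟨b, hbh, hbX⟩ := hX r hr ((hP r hr).bodySat_iff.2 (hb.trans hYX))
  exact ⟨b, hbh, hXY ⟨hbX, hH (mem_headAtoms hr hbh)⟩⟩

theorem IsMinimalModel.subset_headAtoms (hP : ∀ r ∈ P, r.IsPositive) (hX : IsMinimalModel X P) :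
    X ⊆ headAtoms P := by
  rw [← hX.2 _ Set.inter_subset_left
    (isModel_of_inter_subset hP subset_rfl hX.1 Set.inter_subset_left subset_rfl)]
  exact Set.inter_subset_right

end PositivePrograms

section Splitting

variable {R₁ R₂ : Set (Rule Term Atom)} {S A : Set Atom}

theorem isModel_inter_iff (hA : ∀ a ∈ programAtoms R₁, a ∈ A → a ∈ S) :
    isModel (A ∩ S) R₁ ↔ isModel A R₁ :=
  isModel_congr fun a ha => ⟨fun h => h.1, fun h => ⟨h, hA a ha h⟩⟩

theorem IsMinimalModel.split (hR₁ : ∀ r ∈ R₁, r.IsPositive) (hR₂ : ∀ r ∈ R₂, r.IsPositive)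
    (hS₁ : headAtoms R₁ ⊆ S) (hS₂ : headAtoms R₂ ⊆ Sᶜ)
    (hA : ∀ a ∈ programAtoms R₁, a ∈ A → a ∈ S) (h : IsMinimalModel A (R₁ ∪ R₂)) :
    IsMinimalModel (A ∩ S) R₁ ∧ IsMinimalModel A (facts (A ∩ S) ∪ R₂) := by
  obtain ⟨hA₁, hA₂⟩ := isModel_union.1 h.1
  refine ⟨⟨(isModel_inter_iff hA).2 hA₁, fun T hT hT₁ => ?_⟩,
    ⟨isModel_union.2 ⟨isModel_facts.2 Set.inter_subset_left, hA₂⟩, fun T hTA hT => ?_⟩⟩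
  · -- `T ∪ (A \ S)` is a model of `R₁ ∪ R₂` below `A`, so it is `A`.
    have hTA : T ∪ (A \ S) ⊆ A := Set.union_subset (hT.trans Set.inter_subset_left) Set.sdiff_subset
    have hT' : isModel (T ∪ (A \ S)) R₁ := (isModel_congr fun a ha =>
      ⟨Or.inl, fun h => h.elim id fun h' => absurd (hA a ha h'.1) h'.2⟩).1 hT₁
    have hT₂ : isModel (T ∪ (A \ S)) R₂ :=
      isModel_of_inter_subset hR₂ hS₂ hA₂ hTA fun a ha => Or.inr ha
    refine hT.antisymm fun a ha => ?_
    rcases (h.2 _ hTA (isModel_union.2 ⟨hT', hT₂⟩)).symm ▸ ha.1 with h' | h'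
    exacts [h', absurd ha.2 h'.2]
  · obtain ⟨hST, hT₂⟩ := isModel_union.1 hT
    exact h.2 T hTA (isModel_union.2
      ⟨isModel_of_inter_subset hR₁ hS₁ hA₁ hTA (isModel_facts.1 hST), hT₂⟩)

theorem IsMinimalModel.of_split (hR₁ : ∀ r ∈ R₁, r.IsPositive) (hS₁ : headAtoms R₁ ⊆ S)
    (hA : ∀ a ∈ programAtoms R₁, a ∈ A → a ∈ S)
    (h₁ : IsMinimalModel (A ∩ S) R₁) (h₂ : IsMinimalModel A (facts (A ∩ S) ∪ R₂)) :
    IsMinimalModel A (R₁ ∪ R₂) := by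
  obtain ⟨-, hA₂⟩ := isModel_union.1 h₂.1
  refine ⟨isModel_union.2 ⟨(isModel_inter_iff hA).1 h₁.1, hA₂⟩, fun T hTA hT => ?_⟩
  obtain ⟨hT₁, hT₂⟩ := isModel_union.1 hT
  have hTS : T ∩ S = A ∩ S := h₁.2 _ (Set.inter_subset_inter_left S hTA)
    (isModel_of_inter_subset hR₁ hS₁ hT₁ Set.inter_subset_left subset_rfl)
  exact h₂.2 T hTA (isModel_union.2 ⟨isModel_facts.2 (hTS ▸ Set.inter_subset_left), hT₂⟩)

end Splitting

end Alog

open Alog in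
theorem splitting_set_general {Term Atom : Type}
    (P₁ P₂ : Set (Alog.Rule Term Atom))
    (S : Set Atom)
    (hsep : ∀ r ∈ P₁, ∀ a ∈ r.atoms, a ∉ headAtoms P₂)
    (hS1 : headAtoms P₁ ⊆ S)
    (hS2 : ∀ a ∈ headAtoms P₂, a ∉ S)
    (A : Set Atom) :
    Alog.answerSet A (P₁ ∪ P₂) ↔
      Alog.answerSet (A ∩ S) P₁ ∧ Alog.answerSet A (facts (A ∩ S) ∪ P₂) := by
  simp only [answerSet_iff_isMinimalModel, reduct_union, reduct_facts]
  have hR₁ : ∀ r ∈ reduct P₁ A, r.IsPositive := fun _ => isPositive_of_mem_reduct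
  have hR₂ : ∀ r ∈ reduct P₂ A, r.IsPositive := fun _ => isPositive_of_mem_reduct
  have hS₁ : headAtoms (reduct P₁ A) ⊆ S := headAtoms_reduct_subset.trans hS1
  have hS₂ : headAtoms (reduct P₂ A) ⊆ Sᶜ := fun a ha => hS2 a (headAtoms_reduct_subset ha)
  have hsplit : A ⊆ S ∪ headAtoms P₂ → ∀ a ∈ programAtoms P₁, a ∈ A → a ∈ S :=
    fun hA a ha haA => (hA haA).resolve_right <| by
      obtain ⟨r, hr, ha⟩ := Set.mem_iUnion₂.1 ha
      exact hsep r hr a ha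
  have hreduct : A ⊆ S ∪ headAtoms P₂ → reduct P₁ (A ∩ S) = reduct P₁ A :=
    fun hA => reduct_congr fun a ha => ⟨fun h => h.1, fun h => ⟨h, hsplit hA a ha h⟩⟩
  constructor
  · intro h
    have hA : A ⊆ S ∪ headAtoms P₂ := by
      refine (h.subset_headAtoms fun r hr => hr.elim (hR₁ r) (hR₂ r)).trans ?_
      rw [headAtoms_union]
      exact Set.union_subset_union hS₁ headAtoms_reduct_subset
    rw [hreduct hA]
    exact h.split hR₁ hR₂ hS₁ hS₂ fun a ha => hsplit hA a (programAtoms_reduct_subset ha)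
  · rintro ⟨h₁, h₂⟩
    have hA : A ⊆ S ∪ headAtoms P₂ := by
      refine (h₂.subset_headAtoms fun r hr => hr.elim (isPositive_facts r) (hR₂ r)).trans ?_
      rw [headAtoms_union, headAtoms_facts]
      exact Set.union_subset_union Set.inter_subset_right headAtoms_reduct_subset
    rw [hreduct hA] at h₁
    exact h₁.of_split hR₁ hS₁ (fun a ha => hsplit hA a (programAtoms_reduct_subset ha)) h₂

open Alog in
/-- Splitting Set Theorem. -/
theorem splitting_set {Term Atom : Type}
    (P₁ P₂ : Set (Alog.Rule Term Atom)) (h1 : P₁.Finite) (h2 : P₂.Finite)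
    (S : Set Atom)
    (hsep : ∀ r ∈ P₁, ∀ a ∈ r.atoms, a ∉ headAtoms P₂)
    (hS1 : headAtoms P₁ ⊆ S)
    (hS2 : ∀ a ∈ headAtoms P₂, a ∉ S)
    (A : Set Atom) :
    Alog.answerSet A (P₁ ∪ P₂) ↔
      Alog.answerSet (A ∩ S) P₁ ∧ Alog.answerSet A (facts (A ∩ S) ∪ P₂) :=
  splitting_set_general P₁ P₂ S hsep hS1 hS2 A
end
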